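/- arXiv:1411.5526 — 3 statements merged into one kernel-verified Lean document; each statement's English description precedes it below -/
import Mathlib

section
/- Let R be a ring and let f : X → Y be a morphism of ℕ-indexed chain complexes of R-modules (differentials lowering degree by one). If f is a quasi-isomorphism and f_n : X_n → Y_n is surjective for every n ≥ 1, then f_0 is also surjective; hence f is degreewise surjective. (This is the claim that trivial fibrations in the category of non-negatively graded chain complexes are fibrations in the category of unbounded complexes, where fibrations of unbounded complexes are the degreewise surjections.) -/
open CategoryTheory

universe u

/-!
In degree `0` of an `ℕ`-indexed chain complex there is no outgoing differential, so homology
there is the cokernel of `d : X₁ ⟶ X₀`. Thus `f₀` is the middle map of a morphism of cokernel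
sequences `X₁ ⟶ X₀ ⟶ H₀(X)` whose outer maps `f₁` and `H₀(f)` are epimorphisms, and the four
lemma makes `f₀` an epimorphism.
-/

namespace HomologicalComplex

variable {C ι : Type*} [Category C] [Abelian C] {c : ComplexShape ι}
  {K L : HomologicalComplex C c}

lemma epi_opcyclesMap_of_epi_homologyMap_of_not_rel (φ : K ⟶ L) (j : ι)
    (hj : ∀ k, ¬ c.Rel j k) [Epi (homologyMap φ j)] : Epi (opcyclesMap φ j) := by
  have := L.isIso_homologyι j _ rfl (L.shape _ _ (hj _))
  have : Epi (K.homologyι j ≫ opcyclesMap φ j) := by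
    rw [← homologyι_naturality]
    infer_instance
  exact epi_of_epi (K.homologyι j) _

noncomputable def opcyclesCokernelSequence (K : HomologicalComplex C c) (i j : ι) :
    ShortComplex C :=
  ShortComplex.mk (K.d i j) (K.pOpcycles j) (by simp)

lemma opcyclesCokernelSequence_exact (K : HomologicalComplex C c) {i j : ι}
    (hij : c.prev j = i) : (K.opcyclesCokernelSequence i j).Exact :=
  ShortComplex.exact_of_g_is_cokernel _ (K.opcyclesIsCokernel i j hij)

noncomputable def opcyclesCokernelSequenceMap (φ : K ⟶ L) (i j : ι) :
    K.opcyclesCokernelSequence i j ⟶ L.opcyclesCokernelSequence i j where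
  τ₁ := φ.f i
  τ₂ := φ.f j
  τ₃ := opcyclesMap φ j
  comm₁₂ := φ.comm i j
  comm₂₃ := (p_opcyclesMap φ j).symm

lemma epi_f_of_epi_homologyMap_of_not_rel (φ : K ⟶ L) {i j : ι} (hij : c.prev j = i)
    (hj : ∀ k, ¬ c.Rel j k) [Epi (φ.f i)] [Epi (homologyMap φ j)] : Epi (φ.f j) :=
  ShortComplex.epi_of_epi_of_epi_of_epi (opcyclesCokernelSequenceMap φ i j)
    (L.opcyclesCokernelSequence_exact hij) (inferInstanceAs (Epi (K.pOpcycles j)))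
    ‹Epi (φ.f i)› (epi_opcyclesMap_of_epi_homologyMap_of_not_rel φ j hj)

end HomologicalComplex

/-- If a morphism of `ℕ`-indexed chain complexes of `R`-modules is a quasi-isomorphism
and is surjective in every positive degree, then it is surjective in degree `0` as
well; hence it is degreewise surjective. -/
theorem degreewise_surjective_of_quasiIso_of_surjective_pos
    (R : Type u) [Ring R] {X Y : ChainComplex (ModuleCat R) ℕ} (f : X ⟶ Y)
    (hq : QuasiIso f) (hs : ∀ n : ℕ, 1 ≤ n → Function.Surjective (f.f n)) :
    ∀ n : ℕ, Function.Surjective (f.f n) := by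
  rintro (_ | n)
  · have : Epi (f.f 1) := (ModuleCat.epi_iff_surjective _).2 (hs 1 le_rfl)
    rw [← ModuleCat.epi_iff_surjective]
    exact HomologicalComplex.epi_f_of_epi_homologyMap_of_not_rel f (i := 1) (by simp)
      (fun k hk => by simp at hk)
  · exact hs (n + 1) n.succ_pos
end

section
/- Let k be a field of characteristic zero and let ε, δ : ℕ → {1, -1} be arbitrary sign functions. In the polynomial ring k[X], the element X does not lie in the k-linear span of the set { ε(n)·2·X^(n+2) + δ(n)·X^(n+1) : n ∈ ℕ }. (This is the computation showing that for the coalgebra X spanned by x in degree 1 and w = x⊗x in degree 2 with differential w ↦ x, the element corresponding to x survives in the homology of the cobar construction Ω_β X, so that X is not weakly equivalent to the zero coalgebra in the β-model structure, although it is in the ε-model structure.) -/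
open Polynomial

universe u

/-
The span is killed by the linear functional `p ↦ ∑ₘ wₘ · coeff p m` as soon as the weights satisfy
`aₙ wₙ₊₂ + bₙ wₙ₊₁ = 0` for every `n`; since `aₙ ≠ 0` this recursion can be solved with `w₁ = 1`,
and then the functional does not vanish on `X`.
-/

section

variable {k : Type*} [Field k]

/-- The functional `p ↦ ∑ₘ w m * coeff p m` on `k[X]`. -/
noncomputable def weightedCoeffSum (w : ℕ → k) : k[X] →ₗ[k] k :=
  lsum fun m => w m • LinearMap.id

theorem weightedCoeffSum_X_pow (w : ℕ → k) (m : ℕ) : weightedCoeffSum w (X ^ m) = w m := by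
  simp [weightedCoeffSum, X_pow_eq_monomial, sum_monomial_index]

noncomputable def annihilatingWeights (a b : ℕ → k) : ℕ → k
  | 0 => 0
  | 1 => 1
  | n + 2 => -(b n * annihilatingWeights a b (n + 1)) / a n

theorem annihilatingWeights_rec {a : ℕ → k} (b : ℕ → k) {n : ℕ} (ha : a n ≠ 0) :
    a n * annihilatingWeights a b (n + 2) + b n * annihilatingWeights a b (n + 1) = 0 := by
  rw [annihilatingWeights, mul_div_cancel₀ _ ha, neg_add_cancel]

theorem X_notMem_span_range_smul_X_pow_add {a : ℕ → k} (b : ℕ → k) (ha : ∀ n, a n ≠ 0) :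
    (X : k[X]) ∉ Submodule.span k (Set.range fun n => a n • X ^ (n + 2) + b n • X ^ (n + 1)) := by
  set φ := weightedCoeffSum (annihilatingWeights a b)
  have hspan : Submodule.span k (Set.range fun n => a n • X ^ (n + 2) + b n • X ^ (n + 1)) ≤
      LinearMap.ker φ := by
    rw [Submodule.span_le]
    rintro _ ⟨n, rfl⟩
    simp only [SetLike.mem_coe, LinearMap.mem_ker, map_add, map_smul, φ, weightedCoeffSum_X_pow,
      smul_eq_mul, annihilatingWeights_rec b (ha n)]
  intro hX
  have hφX : φ X = 1 := by rw [← pow_one X]; exact weightedCoeffSum_X_pow _ 1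
  simpa [hφX] using hspan hX

end

theorem X_not_mem_span_signs_general
    (k : Type u) [Field k] [CharZero k] (ε δ : ℕ → k)
    (hε : ∀ n, ε n = 1 ∨ ε n = -1) :
    (X : k[X]) ∉ Submodule.span k
      (Set.range fun n : ℕ =>
        ε n • (2 * X ^ (n + 2)) + δ n • X ^ (n + 1) : Set k[X]) := by
  have hcoeff : ∀ n, ε n * 2 ≠ 0 := fun n => by rcases hε n with h | h <;> norm_num [h]
  have hgen : (fun n : ℕ => ε n • (2 * X ^ (n + 2)) + δ n • X ^ (n + 1) : ℕ → k[X]) =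
      fun n => (ε n * 2) • X ^ (n + 2) + δ n • X ^ (n + 1) := by
    ext1 n
    simp only [smul_eq_C_mul, C_mul, C_ofNat]
    ring
  rw [hgen]
  exact X_notMem_span_range_smul_X_pow_add δ hcoeff

/-- Over a field of characteristic zero, for arbitrary signs `ε n, δ n ∈ {1, -1}`, the
element `X` of `k[X]` does not lie in the `k`-linear span of the elements
`ε n • (2 * X ^ (n + 2)) + δ n • X ^ (n + 1)` for `n ∈ ℕ`. -/
theorem X_not_mem_span_signs
    (k : Type u) [Field k] [CharZero k] (ε δ : ℕ → k)
    (hε : ∀ n, ε n = 1 ∨ ε n = -1) (hδ : ∀ n, δ n = 1 ∨ δ n = -1) :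
    (X : k[X]) ∉ Submodule.span k
      (Set.range fun n : ℕ =>
        ε n • (2 * X ^ (n + 2)) + δ n • X ^ (n + 1) : Set k[X]) :=
  X_not_mem_span_signs_general k ε δ hε
end

section
/- Let k be a field of characteristic zero and let T = k⟨x, y⟩ be the free associative (tensor) algebra on two generators x and y. For arbitrary sign functions ε, δ, γ : ℕ × ℕ → {1, -1}, the element y does not lie in the k-linear span of the set { ε(m,n)·x^m y x^n + δ(m,n)·x^(m+1) y x^n + γ(m,n)·x^m y x^(n+1) : m, n ∈ ℕ }. (This is the computation showing that for the coassociative coalgebras C₁ ⊂ C₂, where C₂ is spanned by x, y, z = x⊗y + y⊗x with differential z ↦ y, the element corresponding to y survives in the homology of Ω_κ C₂, so the inclusion C₁ → C₂ is a weak equivalence in the β-model structure but not in the κ-model structure.) -/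
universe u

/-!
A linear functional `φ` on `k⟨x, y⟩` with `φ (xᵐ y xⁿ) = c m n` kills every element of the
spanning set exactly when `ε c(m,n) + δ c(m+1,n) + γ c(m,n+1) = 0`. As `δ` is invertible, this
recurrence can be solved for `c(m+1,n)` from arbitrary initial values `c(0,n)`; choosing
`c(0,0) = 1` gives `φ y = 1`, so `y` is not in the span.
-/

namespace FreeMonoid

@[simp]
theorem toList_of_pow {α : Type*} (a : α) (m : ℕ) : toList (of a ^ m) = List.replicate m a := by
  induction m with
  | zero => rfl
  | succ m ih => rw [pow_succ, toList_mul, ih, toList_of, List.replicate_succ']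

theorem pow_mul_of_mul_pow_injective {α : Type*} {a b : α} (hab : a ≠ b) :
    Function.Injective fun p : ℕ × ℕ => of a ^ p.1 * of b * of a ^ p.2 := by
  suffices h : ∀ m m' n n' : ℕ, List.replicate m a ++ b :: List.replicate n a =
      List.replicate m' a ++ b :: List.replicate n' a → m = m' ∧ n = n' by
    rintro ⟨m, n⟩ ⟨m', n'⟩ hw
    simpa using h m m' n n' (by simpa [mul_assoc] using congrArg toList hw)
  intro m
  induction m with
  | zero =>
    rintro (_ | m') n n' h
    · simpa using congrArg List.length h
    · simp [List.replicate_succ, hab.symm] at h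
  | succ m ih =>
    rintro (_ | m') n n' h
    · simp [List.replicate_succ, hab] at h
    · simpa [List.replicate_succ] using ih m' n n' (by simpa [List.replicate_succ] using h)

end FreeMonoid

namespace FreeAlgebra

theorem basisFreeMonoid_apply (R X : Type*) [CommSemiring R] (w : FreeMonoid X) :
    basisFreeMonoid R X w = FreeMonoid.lift (ι R) w := by
  simp [basisFreeMonoid, equivMonoidAlgebraFreeMonoid]

theorem exists_linearMap_pow_mul_ι_mul_pow {R X : Type*} [CommSemiring R] {a b : X}
    (hab : a ≠ b) (c : ℕ → ℕ → R) :
    ∃ φ : FreeAlgebra R X →ₗ[R] R, ∀ m n, φ (ι R a ^ m * ι R b * ι R a ^ n) = c m n := by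
  let word : ℕ × ℕ → FreeMonoid X := fun p => .of a ^ p.1 * .of b * .of a ^ p.2
  refine ⟨(basisFreeMonoid R X).constr R (Function.extend word (fun p => c p.1 p.2) 0),
    fun m n => ?_⟩
  have hword : ι R a ^ m * ι R b * ι R a ^ n = basisFreeMonoid R X (word (m, n)) := by
    simp [word, basisFreeMonoid_apply]
  rw [hword, Module.Basis.constr_basis,
    (FreeMonoid.pow_mul_of_mul_pow_injective hab).extend_apply]

end FreeAlgebra

section DualCoeff

variable {K : Type*} [DivisionRing K] (ε δ γ : ℕ × ℕ → K)

/-- The solution of the recurrence with `c(0,0) = 1` and `c(0,n+1) = 0`. -/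
def dualCoeff : ℕ → ℕ → K
  | 0, 0 => 1
  | 0, _ + 1 => 0
  | m + 1, n => -((δ (m, n))⁻¹ * (ε (m, n) * dualCoeff m n + γ (m, n) * dualCoeff m (n + 1)))

@[simp]
theorem dualCoeff_zero_zero : dualCoeff ε δ γ 0 0 = 1 := rfl

theorem dualCoeff_relation {m n : ℕ} (hδ : δ (m, n) ≠ 0) :
    ε (m, n) * dualCoeff ε δ γ m n + δ (m, n) * dualCoeff ε δ γ (m + 1) n
      + γ (m, n) * dualCoeff ε δ γ m (n + 1) = 0 := by
  rw [dualCoeff, mul_neg, mul_inv_cancel_left₀ hδ]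
  abel

end DualCoeff

theorem y_not_mem_span_signs_general
    (k : Type u) [Field k] (ε δ γ : ℕ × ℕ → k)
    (hδ : ∀ p, δ p = 1 ∨ δ p = -1) :
    letI x : FreeAlgebra k (Fin 2) := FreeAlgebra.ι k 0
    letI y : FreeAlgebra k (Fin 2) := FreeAlgebra.ι k 1
    y ∉ Submodule.span k
      (Set.range fun p : ℕ × ℕ =>
        ε p • (x ^ p.1 * y * x ^ p.2) + δ p • (x ^ (p.1 + 1) * y * x ^ p.2)
          + γ p • (x ^ p.1 * y * x ^ (p.2 + 1))) := by
  intro hy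
  obtain ⟨φ, hφ⟩ := FreeAlgebra.exists_linearMap_pow_mul_ι_mul_pow (R := k) (X := Fin 2)
    zero_ne_one (dualCoeff ε δ γ)
  have h0 : φ (FreeAlgebra.ι k 1) = 0 := by
    refine (Submodule.span_le (p := LinearMap.ker φ)).2 ?_ hy
    rintro _ ⟨⟨m, n⟩, rfl⟩
    have hδ0 : δ (m, n) ≠ 0 := by rcases hδ (m, n) with h | h <;> simp [h]
    simpa [hφ] using dualCoeff_relation ε δ γ hδ0
  have h1 : φ (FreeAlgebra.ι k 1) = 1 := by simpa using hφ 0 0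
  exact zero_ne_one (h0.symm.trans h1)

/-- In the free associative algebra `k⟨x, y⟩` over a field of characteristic zero, for
arbitrary signs `ε(m,n), δ(m,n), γ(m,n) ∈ {1, -1}`, the generator `y` does not lie in
the `k`-linear span of the elements
`ε(m,n) • xᵐ y xⁿ + δ(m,n) • x^(m+1) y xⁿ + γ(m,n) • xᵐ y x^(n+1)`. -/
theorem y_not_mem_span_signs
    (k : Type u) [Field k] [CharZero k] (ε δ γ : ℕ × ℕ → k)
    (hε : ∀ p, ε p = 1 ∨ ε p = -1) (hδ : ∀ p, δ p = 1 ∨ δ p = -1)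
    (hγ : ∀ p, γ p = 1 ∨ γ p = -1) :
    letI x : FreeAlgebra k (Fin 2) := FreeAlgebra.ι k 0
    letI y : FreeAlgebra k (Fin 2) := FreeAlgebra.ι k 1
    y ∉ Submodule.span k
      (Set.range fun p : ℕ × ℕ =>
        ε p • (x ^ p.1 * y * x ^ p.2) + δ p • (x ^ (p.1 + 1) * y * x ^ p.2)
          + γ p • (x ^ p.1 * y * x ^ (p.2 + 1))) :=
  y_not_mem_span_signs_general k ε δ γ hδ
end
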